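/- For every choice of integers d, Q ≥ 1 and r ≥ 0, the rooted d-tree T_r is balanced, has exactly dQ + r facets and exactly r vertex roots, and its min-density equals mindens(T_r) = 2^d + (r/(dQ))·(2^d − 1). -/

import Mathlib

/-- The block `σ_i = {id+1, id+2, …, (i+1)d}` of vertices. -/
def sigmaB (d i : ℕ) : Finset ℕ := Finset.Icc (i * d + 1) ((i + 1) * d)

/-- The `d`-tree `T_0` on vertex set `{1, …, d(Q+1)}`: its simplices are the nonempty
subsets `σ` with `max σ − min σ ≤ d` (equivalently, `a ≤ b + d` for all `a, b ∈ σ`). -/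
def T0 (d Q : ℕ) : Finset (Finset ℕ) :=
  (Finset.Icc 1 (d * (Q + 1))).powerset.filter
    (fun σ => σ.Nonempty ∧ ∀ a ∈ σ, ∀ b ∈ σ, a ≤ b + d)

/-- The `k`-th attached root vertex (for `k = 0, 1, …`): a fresh vertex label. -/
def rootVtx (d Q k : ℕ) : ℕ := d * (Q + 1) + k + 1

/-- The index of the block to which the `k`-th root vertex is attached in `T_r`
(`k = 0, …, r−1`).  Writing `r = aQ + b` with `b = r % Q`, the first `b` vertices are
attached to `σ_{⌈Q/b⌉}, σ_{⌈2Q/b⌉}, …, σ_{⌈bQ/b⌉} = σ_Q` (coming from the base case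
`T_b`), and the remaining `aQ` vertices are attached cyclically to `σ_1, …, σ_Q`
(`a` full rounds), corresponding to the recursion `T_r = T_{r−Q} + (σ_1, …, σ_Q)`. -/
def target (Q r k : ℕ) : ℕ :=
  if k < r % Q then ((k + 1) * Q + (r % Q) - 1) / (r % Q)
  else (k - r % Q) % Q + 1

/-- The rooted `d`-tree `T_r`: the complex `T_0` together with, for each `k < r`, the
root vertex `rootVtx d Q k` attached to the `(d−1)`-simplex `σ_{target Q r k}`
(attaching adds all sets `τ ∪ {v}` for `τ ⊆ σ`). -/
def Tr (d Q r : ℕ) : Finset (Finset ℕ) :=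
  T0 d Q ∪ (Finset.range r).biUnion
    (fun k => (sigmaB d (target Q r k)).powerset.image (insert (rootVtx d Q k)))

/-- The set of vertex roots of `T_r`. -/
def rootSet (d Q r : ℕ) : Finset ℕ := (Finset.range r).image (rootVtx d Q)

/-- `e_C(S)`: the number of nonempty simplices of `C` with at least one vertex in `S`. -/
def eCount (C : Finset (Finset ℕ)) (S : Finset ℕ) : ℕ :=
  (C.filter (fun σ => σ.Nonempty ∧ (σ ∩ S).Nonempty)).card

/-- The density `dens_C(S) = e_C(S)/|S|`. -/
noncomputable def dens (C : Finset (Finset ℕ)) (S : Finset ℕ) : ℝ :=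
  (eCount C S : ℝ) / (S.card : ℝ)

/-- The vertex set of a complex. -/
def verts (C : Finset (Finset ℕ)) : Finset ℕ := C.sup id

/-- The unrooted vertices of `T_r`: all vertices except the simplex root `σ_0` and the
vertex roots. -/
def unrooted (d Q r : ℕ) : Finset ℕ :=
  verts (Tr d Q r) \ (sigmaB d 0 ∪ rootSet d Q r)

/-!
Write `U = (d, d(Q+1)]` for the unrooted vertices. A simplex of `T_r` meeting `U` is `{v} ∪ τ`
with `v` its largest vertex: either `v ∈ U` and `τ` is a set of the `d` vertices below `v`, or `v`
is a root and `τ` is a subset of the block it is attached to. Over a `d`-set `A` there are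
`2^d − 2^(d−c)` such simplices meeting `S`, where `c = |A ∩ S|`, and by convexity this is at least
`c (2^d − 1) / d`. Hence `d e(S) ≥ d 2^d |S| + (2^d − 1) (|F| + Σ_{x ∈ S} μ x)`, with equality for
`S = U`, where `F` is the set of vertices of `U \ S` at most `d` above a vertex of `S` and `μ x` is
the number of roots attached to the block of `x`. The first `j` blocks carry `⌊j r / Q⌋` roots, so
the partial sums of `r − Q μ` stay in `[0, d Q]`, and a left-to-right scan gives
`r |S| ≤ Q (|F| + Σ_{x ∈ S} μ x)`. Together, `|S| e(U) ≤ d Q e(S)`.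
-/

lemma mul_two_pow_sub_one_le {c d : ℕ} (hc : c ≤ d) :
    c * (2 ^ d - 1) ≤ d * (2 ^ d - 2 ^ (d - c)) := by
  obtain ⟨e, rfl⟩ := Nat.exists_eq_add_of_le hc
  rw [Nat.add_sub_cancel_left, pow_add]
  have hX : c + 1 ≤ 2 ^ c := Nat.lt_two_pow_self
  have hY : 2 ^ e ≤ e * 2 ^ e + 1 := by
    rcases e with _ | e
    · simp
    · nlinarith [Nat.one_le_two_pow (n := e + 1)]
  have hXY : 2 ^ e ≤ 2 ^ c * 2 ^ e := Nat.le_mul_of_pos_left _ (by positivity)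
  zify [hXY, hXY.trans' Nat.one_le_two_pow] at hX hY ⊢
  nlinarith [mul_le_mul_of_nonneg_left hX (by positivity : (0 : ℤ) ≤ e * 2 ^ e),
    mul_le_mul_of_nonneg_left hY (by positivity : (0 : ℤ) ≤ c)]

section Cone

open Finset

variable {α : Type*} [DecidableEq α]

def cone (v : α) (A : Finset α) : Finset (Finset α) := A.powerset.image (insert v)

variable {v v' : α} {A A' S : Finset α} {ρ : Finset α}

lemma mem_cone : ρ ∈ cone v A ↔ ∃ τ ⊆ A, insert v τ = ρ := by
  simp [cone]

lemma apex_mem_of_mem_cone (h : ρ ∈ cone v A) : v ∈ ρ := by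
  obtain ⟨τ, -, rfl⟩ := mem_cone.1 h
  exact mem_insert_self v τ

lemma subset_of_mem_cone (h : ρ ∈ cone v A) : ρ ⊆ insert v A := by
  obtain ⟨τ, hτ, rfl⟩ := mem_cone.1 h
  exact insert_subset_insert v hτ

lemma disjoint_cone (h : v ∉ insert v' A') : Disjoint (cone v A) (cone v' A') :=
  disjoint_left.2 fun _ hρ hρ' => h (subset_of_mem_cone hρ' (apex_mem_of_mem_cone hρ))

lemma card_filter_cone (hv : v ∉ A) (p : Finset α → Prop) [DecidablePred p] :
    #((cone v A).filter p) = #(A.powerset.filter fun τ => p (insert v τ)) := by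
  rw [cone, filter_image]
  refine card_image_of_injOn fun τ hτ τ' hτ' h => ?_
  have hvτ : v ∉ τ := fun hv' => hv (mem_powerset.1 (mem_filter.1 hτ).1 hv')
  have hvτ' : v ∉ τ' := fun hv' => hv (mem_powerset.1 (mem_filter.1 hτ').1 hv')
  rw [← erase_insert hvτ, ← erase_insert hvτ']
  exact congrArg (erase · v) h

lemma card_filter_card_cone (hv : v ∉ A) : #((cone v A).filter fun ρ => #ρ = #A + 1) = 1 := by
  rw [card_filter_cone hv]
  have : (A.powerset.filter fun τ => #(insert v τ) = #A + 1) = powersetCard #A A := by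
    rw [powersetCard_eq_filter]
    refine filter_congr fun τ hτ => ?_
    rw [card_insert_of_notMem fun hv' => hv (mem_powerset.1 hτ hv'), add_left_inj]
  rw [this, powersetCard_self, card_singleton]

lemma card_filter_inter_nonempty_cone_of_mem (hv : v ∉ A) (hvS : v ∈ S) :
    #((cone v A).filter fun ρ => (ρ ∩ S).Nonempty) = 2 ^ #A := by
  have hmeet : ∀ τ ∈ A.powerset, (insert v τ ∩ S).Nonempty := fun τ _ =>
    ⟨v, mem_inter.2 ⟨mem_insert_self v τ, hvS⟩⟩
  rw [card_filter_cone hv, filter_true_of_mem hmeet, card_powerset]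

lemma card_filter_inter_nonempty_cone_of_notMem (hv : v ∉ A) (hvS : v ∉ S) :
    #((cone v A).filter fun ρ => (ρ ∩ S).Nonempty) = 2 ^ #A - 2 ^ #(A \ S) := by
  have hmiss : (A.powerset.filter fun τ => ¬ (insert v τ ∩ S).Nonempty) = (A \ S).powerset := by
    ext τ
    simp only [mem_filter, mem_powerset, insert_inter_of_notMem hvS, not_nonempty_iff_eq_empty,
      ← disjoint_iff_inter_eq_empty, subset_sdiff]
  have hsplit := card_filter_add_card_filter_not (s := A.powerset)
    (p := fun τ => (insert v τ ∩ S).Nonempty)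
  rw [hmiss, card_powerset, card_powerset] at hsplit
  rw [card_filter_cone hv]
  omega

lemma card_inter_mul_le_card_mul_card_filter_cone (hv : v ∉ A) (hvS : v ∉ S) :
    #(A ∩ S) * (2 ^ #A - 1) ≤ #A * #((cone v A).filter fun ρ => (ρ ∩ S).Nonempty) := by
  have := card_sdiff_add_card_inter A S
  rw [card_filter_inter_nonempty_cone_of_notMem hv hvS, show #(A \ S) = #A - #(A ∩ S) by omega]
  exact mul_two_pow_sub_one_le (card_le_card inter_subset_left)

end Cone

section Fringe

open Finset

def fringe (w : ℕ) (S U : Finset ℕ) : Finset ℕ :=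
  (U \ S).filter fun x => ∃ v ∈ S, v < x ∧ x ≤ v + w

def fringeWeight (w : ℕ) (S U : Finset ℕ) (c : ℤ) (ν : ℕ → ℤ) (x : ℕ) : ℤ :=
  (if x ∈ S then 0 else ν x) + if x ∈ fringe w S U then c else 0

variable {a n w v t : ℕ} {c : ℤ} {ν : ℕ → ℤ} {S U : Finset ℕ}

lemma notMem_of_mem_fringe {x : ℕ} (hx : x ∈ fringe w S U) : x ∉ S :=
  (mem_sdiff.1 (mem_filter.1 hx).1).2

lemma fringe_subset : fringe w S U ⊆ U := (filter_subset _ _).trans sdiff_subset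

lemma fringeWeight_of_notMem {x : ℕ} (hxS : x ∉ S) (hxF : x ∉ fringe w S U) :
    fringeWeight w S U c ν x = ν x := by
  simp [fringeWeight, hxS, hxF]

lemma fringeWeight_of_mem_fringe {x : ℕ} (hx : x ∈ fringe w S U) :
    fringeWeight w S U c ν x = ν x + c := by
  simp [fringeWeight, notMem_of_mem_fringe hx, hx]

lemma fringeWeight_nonneg {x : ℕ} (hx : x ∈ S ∨ x ∈ fringe w S U) (hν : -c ≤ ν x) :
    0 ≤ fringeWeight w S U c ν x := by
  rcases hx with hxS | hxF
  · have hxF : x ∉ fringe w S U := fun h => notMem_of_mem_fringe h hxS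
    simp [fringeWeight, hxS, hxF]
  · rw [fringeWeight_of_mem_fringe hxF]
    linarith

lemma sum_fringeWeight (hS : S ⊆ U) :
    ∑ x ∈ U, fringeWeight w S U c ν x = ∑ x ∈ U, ν x - ∑ x ∈ S, ν x + c * #(fringe w S U) := by
  have hsplit : ∀ x, (if x ∈ S then 0 else ν x) = ν x - if x ∈ S then ν x else 0 := fun x => by
    split_ifs <;> ring
  simp only [fringeWeight, hsplit, sum_add_distrib, sum_sub_distrib, sum_ite_mem,
    inter_eq_right.2 hS, inter_eq_right.2 fringe_subset, sum_const, nsmul_eq_mul]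
  ring

lemma sum_Ioc_fringeWeight_of_gap (hS : S ⊆ Ioc a n) (hv : v ∈ S) (hvt : v + w < t)
    (htn : t ≤ n) (hgap : ∀ u ∈ S, u ≤ t → u ≤ v) :
    ∑ x ∈ Ioc v t, fringeWeight w S (Ioc a n) c ν x = ∑ x ∈ Ioc v t, ν x + w * c := by
  have hav : a < v := (mem_Ioc.1 (hS hv)).1
  have hnear : ∀ x ∈ Ioc v (v + w), x ∈ fringe w S (Ioc a n) := fun x hx => by
    obtain ⟨hvx, hxw⟩ := mem_Ioc.1 hx
    have hxS : x ∉ S := fun h => by have := hgap x h (by omega); omega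
    exact mem_filter.2 ⟨mem_sdiff.2 ⟨mem_Ioc.2 ⟨by omega, by omega⟩, hxS⟩, v, hv, hvx, hxw⟩
  have hfar : ∀ x ∈ Ioc (v + w) t, x ∉ S ∧ x ∉ fringe w S (Ioc a n) := fun x hx => by
    obtain ⟨hvx, hxt⟩ := mem_Ioc.1 hx
    refine ⟨fun h => by have := hgap x h hxt; omega, fun h => ?_⟩
    obtain ⟨u, huS, hux, hxu⟩ := (mem_filter.1 h).2
    have := hgap u huS (by omega)
    omega
  rw [← sum_Ioc_consecutive _ (by omega : v ≤ v + w) hvt.le,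
    sum_congr rfl fun x hx => fringeWeight_of_mem_fringe (hnear x hx),
    sum_congr rfl fun x hx => fringeWeight_of_notMem (hfar x hx).1 (hfar x hx).2,
    ← sum_Ioc_consecutive ν (by omega : v ≤ v + w) hvt.le, sum_add_distrib, sum_const,
    Nat.card_Ioc, Nat.add_sub_cancel_left, nsmul_eq_mul]
  ring

lemma sum_Ioc_fringeWeight_of_forall_lt (h : ∀ u ∈ S, t < u) :
    ∑ x ∈ Ioc a t, fringeWeight w S U c ν x = ∑ x ∈ Ioc a t, ν x := by
  refine sum_congr rfl fun x hx => fringeWeight_of_notMem (fun hxS => ?_) (fun hxF => ?_)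
  · have := h x hxS
    have := (mem_Ioc.1 hx).2
    omega
  · obtain ⟨u, huS, hux, -⟩ := (mem_filter.1 hxF).2
    have := h u huS
    have := (mem_Ioc.1 hx).2
    omega

-- The partial sums do not decrease at points of `S` or of the fringe. Beyond the fringe of the
-- last point `v` of `S` they follow the partial sums of `ν`, which lose at most `w * c` from `v`
-- on; the `w` fringe points after `v` have paid for this in advance.
lemma sum_Ioc_fringeWeight_nonneg (hS : S ⊆ Ioc a n) (hν : ∀ x ∈ Ioc a n, -c ≤ ν x)
    (hD : ∀ y ∈ Icc a n, 0 ≤ ∑ x ∈ Ioc a y, ν x ∧ ∑ x ∈ Ioc a y, ν x ≤ w * c) :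
    ∀ t ≤ n, 0 ≤ ∑ x ∈ Ioc a t, fringeWeight w S (Ioc a n) c ν x := by
  intro t
  induction t using Nat.strong_induction_on with
  | _ t ih =>
  intro htn
  rcases le_or_gt t a with hta | hat
  · simp [Ioc_eq_empty_of_le hta]
  have htU : t ∈ Ioc a n := mem_Ioc.2 ⟨hat, htn⟩
  by_cases hkeep : t ∈ S ∨ t ∈ fringe w S (Ioc a n)
  · obtain ⟨s, rfl⟩ := Nat.exists_eq_add_one_of_ne_zero (by omega : t ≠ 0)
    rw [sum_Ioc_succ_top (by omega)]
    linarith [ih s (by omega) (by omega), fringeWeight_nonneg hkeep (hν _ htU)]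
  obtain ⟨htS, htF⟩ := not_or.1 hkeep
  by_cases hprev : (S.filter (· < t)).Nonempty
  · set v := (S.filter (· < t)).max' hprev
    obtain ⟨hvS, hvt⟩ := mem_filter.1 (max'_mem _ hprev)
    have hgap : ∀ u ∈ S, u ≤ t → u ≤ v := fun u hu hut =>
      le_max' (S.filter (· < t)) u (mem_filter.2 ⟨hu, hut.lt_of_ne (ne_of_mem_of_not_mem hu htS)⟩)
    have hav : a < v := (mem_Ioc.1 (hS hvS)).1
    have hvw : v + w < t := by
      by_contra h
      exact htF (mem_filter.2 ⟨mem_sdiff.2 ⟨htU, htS⟩, v, hvS, hvt, by omega⟩)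
    rw [← sum_Ioc_consecutive _ hav.le hvt.le, sum_Ioc_fringeWeight_of_gap hS hvS hvw htn hgap]
    have hνv := sum_Ioc_consecutive ν hav.le hvt.le
    linarith [ih v hvt (by omega), (hD t (mem_Icc.2 ⟨hat.le, htn⟩)).1,
      (hD v (mem_Icc.2 ⟨hav.le, by omega⟩)).2]
  · rw [sum_Ioc_fringeWeight_of_forall_lt fun u hu => ?_]
    · exact (hD t (mem_Icc.2 ⟨hat.le, htn⟩)).1
    · by_contra h
      exact hprev ⟨u, mem_filter.2 ⟨hu, (not_lt.1 h).lt_of_ne (ne_of_mem_of_not_mem hu htS)⟩⟩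

theorem sum_le_mul_card_fringe (hS : S ⊆ Ioc a n) (hν : ∀ x ∈ Ioc a n, -c ≤ ν x)
    (hD : ∀ y ∈ Icc a n, 0 ≤ ∑ x ∈ Ioc a y, ν x ∧ ∑ x ∈ Ioc a y, ν x ≤ w * c)
    (hn : ∑ x ∈ Ioc a n, ν x = 0) :
    ∑ x ∈ S, ν x ≤ c * #(fringe w S (Ioc a n)) := by
  have := sum_Ioc_fringeWeight_nonneg hS hν hD n le_rfl
  rw [sum_fringeWeight hS, hn] at this
  linarith

end Fringe

section Target

open Finset

variable {Q r : ℕ}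

lemma card_filter_mod_lt {j : ℕ} (hj : j ≤ Q) (a : ℕ) :
    #{i ∈ range (Q * a) | i % Q < j} = a * j := by
  induction a with
  | zero => simp
  | succ a ih =>
    have hblock : {i ∈ range Q | (Q * a + i) % Q < j} = range j := by
      ext i
      simp only [mem_filter, mem_range]
      constructor
      · rintro ⟨hi, h⟩
        rwa [Nat.mul_add_mod, Nat.mod_eq_of_lt hi] at h
      · intro hi
        rw [Nat.mul_add_mod, Nat.mod_eq_of_lt (by omega)]
        exact ⟨by omega, hi⟩
    rw [Nat.mul_succ, card_filter, sum_range_add, ← card_filter, ← card_filter, ih, hblock,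
      card_range]
    ring

lemma card_filter_target_le {j : ℕ} (hQ : 0 < Q) (hj : j ≤ Q) :
    #{k ∈ range r | target Q r k ≤ j} = j * r / Q := by
  set b := r % Q with hb
  have hr : r = b + Q * (r / Q) := (Nat.mod_add_div r Q).symm
  have hjb : j * b / Q ≤ b := Nat.div_le_of_le_mul (Nat.mul_le_mul_right b hj)
  have hhead : {k ∈ range b | target Q r k ≤ j} = range (j * b / Q) := by
    ext k
    simp only [mem_filter, mem_range]
    rw [Nat.lt_iff_add_one_le (m := k) (n := j * b / Q), Nat.le_div_iff_mul_le hQ]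
    constructor
    · rintro ⟨hk, hle⟩
      rw [target, ← hb, if_pos hk, Nat.div_le_iff_le_mul_add_pred (by omega)] at hle
      rw [mul_comm j]
      omega
    · intro hle
      have hk : k < b := by nlinarith
      refine ⟨hk, ?_⟩
      rw [target, ← hb, if_pos hk, Nat.div_le_iff_le_mul_add_pred (by omega)]
      rw [mul_comm j] at hle
      omega
  have htail : #{i ∈ range (Q * (r / Q)) | target Q r (b + i) ≤ j} = r / Q * j := by
    rw [← card_filter_mod_lt hj (r / Q)]
    congr 1
    refine filter_congr fun i _ => ?_
    rw [target, if_neg (by omega), Nat.add_sub_cancel_left]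
    omega
  rw [show range r = range (b + Q * (r / Q)) from congrArg range hr, card_filter, sum_range_add,
    ← card_filter, ← card_filter, hhead, htail, card_range]
  conv_rhs => rw [hr, mul_add, ← mul_assoc, mul_comm j Q, mul_assoc, Nat.add_mul_div_left _ _ hQ]
  ring

lemma one_le_target {k : ℕ} (hQ : 0 < Q) (hk : k < r) : 1 ≤ target Q r k := by
  have h0 : #{k ∈ range r | target Q r k ≤ 0} = 0 := by
    rw [card_filter_target_le hQ (Nat.zero_le Q), zero_mul, Nat.zero_div]
  have := card_filter_eq_zero_iff.1 h0 k (mem_range.2 hk)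
  omega

lemma target_le {k : ℕ} (hQ : 0 < Q) (hk : k < r) : target Q r k ≤ Q := by
  have hQ' : #{k ∈ range r | target Q r k ≤ Q} = #(range r) := by
    rw [card_filter_target_le hQ le_rfl, card_range, Nat.mul_div_cancel_left _ hQ]
  exact filter_card_eq hQ' k (mem_range.2 hk)

end Target

section Tr

open Finset

variable {d Q r : ℕ}

lemma mem_sigmaB {i x : ℕ} : x ∈ sigmaB d i ↔ i * d < x ∧ x ≤ i * d + d := by
  rw [sigmaB, mem_Icc, add_one_mul]
  omega

lemma card_sigmaB (i : ℕ) : #(sigmaB d i) = d := by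
  rw [sigmaB, Nat.card_Icc, add_one_mul]
  omega

lemma sigmaB_subset_Ioc {i : ℕ} (h1 : 1 ≤ i) (h2 : i ≤ Q) : sigmaB d i ⊆ Ioc d (d * (Q + 1)) := by
  intro x hx
  rw [mem_sigmaB] at hx
  have : d ≤ i * d := Nat.le_mul_of_pos_left d h1
  have : i * d + d ≤ d * (Q + 1) := by nlinarith
  exact mem_Ioc.2 ⟨by omega, by omega⟩

lemma lt_rootVtx (k : ℕ) : d * (Q + 1) < rootVtx d Q k := by
  rw [rootVtx]
  omega

lemma rootVtx_injective : Function.Injective (rootVtx d Q) := fun k k' h => by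
  rw [rootVtx, rootVtx] at h
  omega

lemma rootVtx_notMem_sigmaB {j k : ℕ} (hQ : 0 < Q) (hk : k < r) :
    rootVtx d Q j ∉ sigmaB d (target Q r k) := fun h => by
  have := mem_Ioc.1 (sigmaB_subset_Ioc (one_le_target hQ hk) (target_le hQ hk) h)
  have := lt_rootVtx (d := d) (Q := Q) j
  omega

lemma rootVtx_notMem_insert_sigmaB {j k : ℕ} (hQ : 0 < Q) (hk : k < r) (hjk : j ≠ k) :
    rootVtx d Q j ∉ insert (rootVtx d Q k) (sigmaB d (target Q r k)) := by
  rw [mem_insert, not_or]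
  exact ⟨rootVtx_injective.ne hjk, rootVtx_notMem_sigmaB hQ hk⟩

lemma mem_T0 {σ : Finset ℕ} :
    σ ∈ T0 d Q ↔ σ ⊆ Icc 1 (d * (Q + 1)) ∧ σ.Nonempty ∧ ∀ a ∈ σ, ∀ b ∈ σ, a ≤ b + d := by
  simp [T0]

lemma filter_T0_exists_lt :
    (T0 d Q).filter (fun σ => ∃ x ∈ σ, d < x)
      = (Ioc d (d * (Q + 1))).biUnion fun M => cone M (Ico (M - d) M) := by
  ext σ
  simp only [mem_filter, mem_T0, mem_biUnion, mem_cone, mem_Ioc]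
  constructor
  · rintro ⟨⟨hsub, hne, hdiam⟩, x, hx, hdx⟩
    set M := σ.max' hne
    have hM : M ∈ σ := max'_mem σ hne
    have hMN := (mem_Icc.1 (hsub hM)).2
    refine ⟨M, ⟨by have := le_max' σ x hx; omega, hMN⟩, σ.erase M, fun y hy => ?_,
      insert_erase hM⟩
    obtain ⟨hyM, hy⟩ := mem_erase.1 hy
    have := le_max' σ y hy
    have := hdiam M hM y hy
    exact mem_Ico.2 ⟨by omega, by omega⟩
  · rintro ⟨M, ⟨hdM, hMN⟩, τ, hτ, rfl⟩
    have hτ' : ∀ y ∈ insert M τ, M - d ≤ y ∧ y ≤ M := fun y hy => by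
      rcases mem_insert.1 hy with rfl | hy
      · omega
      · have := mem_Ico.1 (hτ hy); omega
    refine ⟨⟨fun y hy => ?_, insert_nonempty M τ, fun a ha b hb => ?_⟩, M, mem_insert_self M τ, hdM⟩
    · have := hτ' y hy; exact mem_Icc.2 ⟨by omega, by omega⟩
    · have := hτ' a ha; have := hτ' b hb; omega

lemma disjoint_cone_Ico {M M' : ℕ} (h : M ≠ M') :
    Disjoint (cone M (Ico (M - d) M)) (cone M' (Ico (M' - d) M')) := by
  rcases lt_or_gt_of_ne h with h | h
  · refine (disjoint_cone ?_).symm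
    simp only [mem_insert, mem_Ico]
    omega
  · refine disjoint_cone ?_
    simp only [mem_insert, mem_Ico]
    omega

lemma Tr_eq : Tr d Q r = T0 d Q ∪ (range r).biUnion
    fun k => cone (rootVtx d Q k) (sigmaB d (target Q r k)) := rfl

lemma card_filter_Tr (hQ : 0 < Q) (p : Finset ℕ → Prop) [DecidablePred p]
    (hp : ∀ σ ∈ T0 d Q, p σ → ∃ x ∈ σ, d < x) :
    #((Tr d Q r).filter p)
      = ∑ M ∈ Ioc d (d * (Q + 1)), #((cone M (Ico (M - d) M)).filter p)
        + ∑ k ∈ range r, #((cone (rootVtx d Q k) (sigmaB d (target Q r k))).filter p) := by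
  have hT0 : (T0 d Q).filter p = ((T0 d Q).filter fun σ => ∃ x ∈ σ, d < x).filter p := by
    rw [filter_filter]
    exact filter_congr fun σ hσ => ⟨fun h => ⟨hp σ hσ h, h⟩, And.right⟩
  have hdisj : Disjoint (T0 d Q) ((range r).biUnion
      fun k => cone (rootVtx d Q k) (sigmaB d (target Q r k))) := by
    refine disjoint_left.2 fun σ hσ hσ' => ?_
    obtain ⟨k, -, hk⟩ := mem_biUnion.1 hσ'
    have := mem_Icc.1 ((mem_T0.1 hσ).1 (apex_mem_of_mem_cone hk))
    have := lt_rootVtx (d := d) (Q := Q) k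
    omega
  rw [Tr_eq, filter_union, card_union_of_disjoint (disjoint_filter_filter hdisj), hT0,
    filter_T0_exists_lt, filter_biUnion, filter_biUnion, card_biUnion, card_biUnion]
  · intro k hk j hj hkj
    exact disjoint_filter_filter
      (disjoint_cone (rootVtx_notMem_insert_sigmaB hQ (mem_range.1 hj) hkj))
  · intro M _ M' _ h
    exact disjoint_filter_filter (disjoint_cone_Ico h)

lemma card_Ico_sub {M : ℕ} (h : d ≤ M) : #(Ico (M - d) M) = d := by
  rw [Nat.card_Ico]
  omega

lemma card_facets_Tr (hQ : 0 < Q) : #((Tr d Q r).filter fun σ => #σ = d + 1) = d * Q + r := by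
  rw [card_filter_Tr hQ _ fun σ hσ hcard => ?_]
  · have hT0 : ∀ M ∈ Ioc d (d * (Q + 1)),
        #((cone M (Ico (M - d) M)).filter fun σ => #σ = d + 1) = 1 := fun M hM => by
      have := card_filter_card_cone (v := M) (A := Ico (M - d) M) (by simp)
      rwa [card_Ico_sub (mem_Ioc.1 hM).1.le] at this
    have hroot : ∀ k ∈ range r,
        #((cone (rootVtx d Q k) (sigmaB d (target Q r k))).filter fun σ => #σ = d + 1) = 1 :=
      fun k hk => by
        have := card_filter_card_cone (rootVtx_notMem_sigmaB (d := d) (j := k) hQ (mem_range.1 hk))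
        rwa [card_sigmaB] at this
    rw [sum_congr rfl hT0, sum_congr rfl hroot, sum_const, sum_const, Nat.card_Ioc, card_range,
      smul_eq_mul, smul_eq_mul, mul_one, mul_one, mul_add_one, Nat.add_sub_cancel]
  · by_contra! h
    have : σ ⊆ Icc 1 d := fun x hx => mem_Icc.2 ⟨(mem_Icc.1 ((mem_T0.1 hσ).1 hx)).1, h x hx⟩
    have := card_le_card this
    rw [Nat.card_Icc] at this
    omega

lemma unrooted_eq (hQ : 0 < Q) : unrooted d Q r = Ioc d (d * (Q + 1)) := by
  ext x
  simp only [unrooted, verts, mem_sdiff, mem_union, mem_sup, id, not_or, rootSet, mem_image,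
    mem_range, not_exists, not_and]
  constructor
  · rintro ⟨⟨σ, hσ, hx⟩, hx0, hxR⟩
    rw [mem_sigmaB] at hx0
    rw [Tr_eq, mem_union, mem_biUnion] at hσ
    rcases hσ with hσ | ⟨k, hk, hσ⟩
    · have := mem_Icc.1 ((mem_T0.1 hσ).1 hx)
      exact mem_Ioc.2 ⟨by omega, this.2⟩
    · rcases mem_insert.1 (subset_of_mem_cone hσ hx) with rfl | hx
      · exact absurd rfl (hxR k (mem_range.1 hk))
      · exact sigmaB_subset_Ioc (one_le_target hQ (mem_range.1 hk))
          (target_le hQ (mem_range.1 hk)) hx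
  · intro hx
    obtain ⟨hdx, hxN⟩ := mem_Ioc.1 hx
    refine ⟨⟨{x}, mem_union_left _ (mem_T0.2 ⟨?_, singleton_nonempty x, ?_⟩), mem_singleton_self x⟩,
      ?_, fun k _ h => ?_⟩
    · simpa using ⟨by omega, hxN⟩
    · simp
    · rw [mem_sigmaB]; omega
    · have := lt_rootVtx (d := d) (Q := Q) k
      omega

lemma eCount_eq_card_filter (C : Finset (Finset ℕ)) (S : Finset ℕ) :
    eCount C S = #(C.filter fun σ => (σ ∩ S).Nonempty) := by
  rw [eCount]
  congr 1
  exact filter_congr fun σ _ => and_iff_right_of_imp fun h => h.mono inter_subset_left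

lemma eCount_Tr (hQ : 0 < Q) {S : Finset ℕ} (hS : S ⊆ Ioc d (d * (Q + 1))) :
    eCount (Tr d Q r) S
      = ∑ M ∈ Ioc d (d * (Q + 1)), #((cone M (Ico (M - d) M)).filter fun ρ => (ρ ∩ S).Nonempty)
        + ∑ k ∈ range r, #((cone (rootVtx d Q k) (sigmaB d (target Q r k))).filter
            fun ρ => (ρ ∩ S).Nonempty) := by
  rw [eCount_eq_card_filter, card_filter_Tr hQ _ fun σ _ ⟨x, hx⟩ =>
    ⟨x, (mem_inter.1 hx).1, (mem_Ioc.1 (hS (mem_inter.1 hx).2)).1⟩]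

lemma eCount_unrooted (hQ : 0 < Q) :
    eCount (Tr d Q r) (Ioc d (d * (Q + 1))) = d * Q * 2 ^ d + r * (2 ^ d - 1) := by
  rw [eCount_Tr hQ subset_rfl]
  have hT0 : ∀ M ∈ Ioc d (d * (Q + 1)), #((cone M (Ico (M - d) M)).filter
      fun ρ => (ρ ∩ Ioc d (d * (Q + 1))).Nonempty) = 2 ^ d := fun M hM => by
    rw [card_filter_inter_nonempty_cone_of_mem (by simp) hM, card_Ico_sub (mem_Ioc.1 hM).1.le]
  have hroot : ∀ k ∈ range r, #((cone (rootVtx d Q k) (sigmaB d (target Q r k))).filter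
      fun ρ => (ρ ∩ Ioc d (d * (Q + 1))).Nonempty) = 2 ^ d - 1 := fun k hk => by
    have hk := mem_range.1 hk
    rw [card_filter_inter_nonempty_cone_of_notMem (rootVtx_notMem_sigmaB (j := k) hQ hk)
      fun h => (lt_rootVtx k).not_ge (mem_Ioc.1 h).2, card_sigmaB,
      sdiff_eq_empty_iff_subset.2 (sigmaB_subset_Ioc (one_le_target hQ hk) (target_le hQ hk)),
      card_empty, pow_zero]
  rw [sum_congr rfl hT0, sum_congr rfl hroot, sum_const, sum_const, Nat.card_Ioc, card_range,
    smul_eq_mul, smul_eq_mul, mul_add_one, Nat.add_sub_cancel]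

lemma le_mul_card_filter_cone_Ico {M : ℕ} {S U : Finset ℕ} (hM : d ≤ M) :
    (if M ∈ S then d * 2 ^ d else 0) + (if M ∈ fringe d S U then 2 ^ d - 1 else 0)
      ≤ d * #((cone M (Ico (M - d) M)).filter fun ρ => (ρ ∩ S).Nonempty) := by
  have hMA : M ∉ Ico (M - d) M := by simp
  by_cases hMS : M ∈ S
  · rw [if_pos hMS, if_neg fun h => notMem_of_mem_fringe h hMS,
      card_filter_inter_nonempty_cone_of_mem hMA hMS, card_Ico_sub hM, add_zero]
  rw [if_neg hMS, zero_add]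
  have hle := card_inter_mul_le_card_mul_card_filter_cone hMA hMS
  rw [card_Ico_sub hM] at hle
  split_ifs with hMF
  · obtain ⟨v, hvS, hvM, hMv⟩ := (mem_filter.1 hMF).2
    have : 1 ≤ #(Ico (M - d) M ∩ S) :=
      card_pos.2 ⟨v, mem_inter.2 ⟨mem_Ico.2 ⟨by omega, hvM⟩, hvS⟩⟩
    nlinarith
  · exact Nat.zero_le _

lemma le_mul_eCount_Tr (hQ : 0 < Q) {S : Finset ℕ} (hS : S ⊆ Ioc d (d * (Q + 1))) :
    d * 2 ^ d * #S + (2 ^ d - 1) * (#(fringe d S (Ioc d (d * (Q + 1))))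
      + ∑ k ∈ range r, #(sigmaB d (target Q r k) ∩ S)) ≤ d * eCount (Tr d Q r) S := by
  set U := Ioc d (d * (Q + 1))
  have hT0 := sum_le_sum fun M (hM : M ∈ U) =>
    le_mul_card_filter_cone_Ico (S := S) (U := U) (mem_Ioc.1 hM).1.le
  rw [sum_add_distrib, sum_ite_mem, sum_ite_mem, inter_eq_right.2 hS,
    inter_eq_right.2 fringe_subset, sum_const, sum_const, smul_eq_mul, smul_eq_mul] at hT0
  have hroot : ∀ k ∈ range r, (2 ^ d - 1) * #(sigmaB d (target Q r k) ∩ S)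
      ≤ d * #((cone (rootVtx d Q k) (sigmaB d (target Q r k))).filter
        fun ρ => (ρ ∩ S).Nonempty) := fun k hk => by
    have := card_inter_mul_le_card_mul_card_filter_cone
      (rootVtx_notMem_sigmaB (j := k) hQ (mem_range.1 hk))
      fun h => (lt_rootVtx k).not_ge (mem_Ioc.1 (hS h)).2
    rwa [card_sigmaB, mul_comm] at this
  calc d * 2 ^ d * #S + (2 ^ d - 1) * (#(fringe d S U)
        + ∑ k ∈ range r, #(sigmaB d (target Q r k) ∩ S))
      = (#S * (d * 2 ^ d) + #(fringe d S U) * (2 ^ d - 1))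
        + ∑ k ∈ range r, (2 ^ d - 1) * #(sigmaB d (target Q r k) ∩ S) := by
        rw [mul_add, mul_sum]; ring
    _ ≤ _ := add_le_add hT0 (sum_le_sum hroot)
    _ = d * eCount (Tr d Q r) S := by rw [eCount_Tr hQ hS, mul_add, mul_sum, mul_sum]

end Tr

section RootCount

open Finset

variable {d Q r : ℕ}

def rootCount (d Q r x : ℕ) : ℕ := #{k ∈ range r | x ∈ sigmaB d (target Q r k)}

lemma sum_card_sigmaB_target_inter (X : Finset ℕ) :
    ∑ k ∈ range r, #(sigmaB d (target Q r k) ∩ X) = ∑ x ∈ X, rootCount d Q r x := by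
  have hcount : ∀ k, #(sigmaB d (target Q r k) ∩ X)
      = ∑ x ∈ X, if x ∈ sigmaB d (target Q r k) then 1 else 0 := fun k => by
    rw [← card_filter, filter_mem_eq_inter, inter_comm]
  simp only [hcount, rootCount, card_filter]
  exact sum_comm

lemma card_sigmaB_inter_Ioc {t j w : ℕ} (ht : 1 ≤ t) (hw : w ≤ d) :
    #(sigmaB d t ∩ Ioc d (d + j * d + w))
      = (d - w) * (if t ≤ j then 1 else 0) + w * (if t ≤ j + 1 then 1 else 0) := by
  have hσ : sigmaB d t = Ioc (t * d) (t * d + d) := by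
    ext x; rw [mem_sigmaB, mem_Ioc]
  rw [hσ, Ioc_inter_Ioc, Nat.card_Ioc]
  have hd : d ≤ t * d := Nat.le_mul_of_pos_left d ht
  rcases lt_trichotomy t (j + 1) with h | rfl | h
  · have : t * d ≤ j * d := Nat.mul_le_mul_right d (by omega)
    rw [if_pos (by omega), if_pos (by omega)]
    omega
  · rw [if_neg (by omega), if_pos le_rfl, add_one_mul]
    omega
  · have : (j + 2) * d ≤ t * d := Nat.mul_le_mul_right d h
    have : (j + 2) * d = j * d + 2 * d := by ring
    rw [if_neg (by omega), if_neg (by omega)]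
    omega

lemma sum_rootCount_Ioc (hQ : 0 < Q) {j w : ℕ} (hj : j < Q) (hw : w ≤ d) :
    ∑ x ∈ Ioc d (d + j * d + w), rootCount d Q r x
      = (d - w) * (j * r / Q) + w * ((j + 1) * r / Q) := by
  rw [← sum_card_sigmaB_target_inter, sum_congr rfl fun k hk =>
    card_sigmaB_inter_Ioc (one_le_target hQ (mem_range.1 hk)) hw, sum_add_distrib, ← mul_sum,
    ← mul_sum, sum_boole, sum_boole, Nat.cast_id, Nat.cast_id, card_filter_target_le hQ hj.le,
    card_filter_target_le hQ hj]

lemma sum_Ioc_sub_mul_rootCount (hQ : 0 < Q) {j w : ℕ} (hj : j < Q) (hw : w ≤ d) :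
    ∑ x ∈ Ioc d (d + j * d + w), ((r : ℤ) - Q * rootCount d Q r x)
      = ((d : ℤ) - w) * (j * r % Q : ℕ) + w * ((j + 1) * r % Q : ℕ) := by
  have hsum := congrArg (Nat.cast (R := ℤ)) (sum_rootCount_Ioc (r := r) hQ hj hw)
  rw [Nat.cast_sum] at hsum
  have h1 := congrArg (Nat.cast (R := ℤ)) (Nat.div_add_mod (j * r) Q)
  have h2 := congrArg (Nat.cast (R := ℤ)) (Nat.div_add_mod ((j + 1) * r) Q)
  rw [sum_sub_distrib, sum_const, Nat.card_Ioc, ← mul_sum, hsum,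
    show d + j * d + w - d = j * d + w by omega]
  simp only [nsmul_eq_mul, Nat.cast_add, Nat.cast_mul, Nat.cast_sub hw, Nat.cast_one] at h1 h2 ⊢
  linear_combination (-(d : ℤ) + w) * h1 - w * h2

lemma exists_eq_add_mul_add {x : ℕ} (hx : x ∈ Ioc d (d * (Q + 1))) :
    ∃ j w, j < Q ∧ 0 < w ∧ w ≤ d ∧ x = d + j * d + w := by
  obtain ⟨hdx, hxN⟩ := mem_Ioc.1 hx
  have hN : d * (Q + 1) = Q * d + d := by ring
  have hd : 0 < d := by
    rcases Nat.eq_zero_or_pos d with rfl | hd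
    · rw [zero_mul] at hxN; omega
    · exact hd
  have hdiv := Nat.div_add_mod (x - d - 1) d
  have hmod := Nat.mod_lt (x - d - 1) hd
  refine ⟨(x - d - 1) / d, (x - d - 1) % d + 1, ?_, by omega, by omega, ?_⟩
  · rw [Nat.div_lt_iff_lt_mul hd]
    omega
  · rw [mul_comm] at hdiv
    omega

lemma sum_Ioc_sub_mul_rootCount_mem_Icc (hQ : 0 < Q) {y : ℕ} (hy : y ∈ Icc d (d * (Q + 1))) :
    ∑ x ∈ Ioc d y, ((r : ℤ) - Q * rootCount d Q r x) ∈ Set.Icc 0 ((d : ℤ) * Q) := by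
  obtain ⟨j, w, hj, hw, rfl⟩ : ∃ j w, j < Q ∧ w ≤ d ∧ y = d + j * d + w := by
    rcases (mem_Icc.1 hy).1.lt_or_eq with h | rfl
    · obtain ⟨j, w, hj, -, hw, rfl⟩ := exists_eq_add_mul_add (mem_Ioc.2 ⟨h, (mem_Icc.1 hy).2⟩)
      exact ⟨j, w, hj, hw, rfl⟩
    · exact ⟨0, 0, hQ, Nat.zero_le _, by simp⟩
  rw [sum_Ioc_sub_mul_rootCount hQ hj hw]
  have h1 : ((j * r % Q : ℕ) : ℤ) < Q := by exact_mod_cast Nat.mod_lt _ hQ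
  have h2 : (((j + 1) * r % Q : ℕ) : ℤ) < Q := by exact_mod_cast Nat.mod_lt _ hQ
  have hw' : (w : ℤ) ≤ d := by exact_mod_cast hw
  constructor <;> nlinarith [Int.natCast_nonneg (j * r % Q), Int.natCast_nonneg ((j + 1) * r % Q),
    Int.natCast_nonneg w]

lemma sum_Ioc_sub_mul_rootCount_eq_zero (hQ : 0 < Q) :
    ∑ x ∈ Ioc d (d * (Q + 1)), ((r : ℤ) - Q * rootCount d Q r x) = 0 := by
  have := sum_Ioc_sub_mul_rootCount (d := d) (r := r) hQ (Nat.sub_lt hQ one_pos) le_rfl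
  rwa [show d + (Q - 1) * d + d = d * (Q + 1) by
      obtain ⟨q, rfl⟩ := Nat.exists_eq_add_one_of_ne_zero hQ.ne'; rw [Nat.add_sub_cancel]; ring,
    Nat.sub_one_add_one hQ.ne', Nat.mul_mod_right, sub_self, zero_mul, Nat.cast_zero, mul_zero,
    add_zero] at this

lemma neg_le_sub_mul_rootCount (hQ : 0 < Q) {x : ℕ} (hx : x ∈ Ioc d (d * (Q + 1))) :
    -(Q : ℤ) ≤ r - Q * rootCount d Q r x := by
  obtain ⟨j, w, hj, hw0, hw, rfl⟩ := exists_eq_add_mul_add hx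
  have hstep := sum_Ioc_succ_top (show d ≤ d + j * d + (w - 1) by omega)
    fun x => (r : ℤ) - Q * rootCount d Q r x
  rw [show d + j * d + (w - 1) + 1 = d + j * d + w by omega, sum_Ioc_sub_mul_rootCount hQ hj hw,
    sum_Ioc_sub_mul_rootCount hQ hj (by omega), Nat.cast_sub hw0, Nat.cast_one] at hstep
  have h1 : ((j * r % Q : ℕ) : ℤ) < Q := by exact_mod_cast Nat.mod_lt _ hQ
  linarith [Int.natCast_nonneg ((j + 1) * r % Q)]

lemma card_mul_le_card_fringe_add_sum_rootCount (hQ : 0 < Q) {S : Finset ℕ}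
    (hS : S ⊆ Ioc d (d * (Q + 1))) :
    r * #S ≤ Q * (#(fringe d S (Ioc d (d * (Q + 1)))) + ∑ x ∈ S, rootCount d Q r x) := by
  have := sum_le_mul_card_fringe hS (fun x hx => neg_le_sub_mul_rootCount hQ hx)
    (fun y hy => sum_Ioc_sub_mul_rootCount_mem_Icc hQ hy)
    (sum_Ioc_sub_mul_rootCount_eq_zero (r := r) hQ)
  rw [sum_sub_distrib, sum_const, ← mul_sum, nsmul_eq_mul] at this
  zify
  linarith

lemma card_mul_eCount_unrooted_le (hQ : 0 < Q) {S : Finset ℕ}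
    (hS : S ⊆ Ioc d (d * (Q + 1))) :
    #S * eCount (Tr d Q r) (Ioc d (d * (Q + 1))) ≤ d * Q * eCount (Tr d Q r) S := by
  have hcore := card_mul_le_card_fringe_add_sum_rootCount (r := r) hQ hS
  have he := le_mul_eCount_Tr (r := r) hQ hS
  rw [sum_card_sigmaB_target_inter] at he
  rw [eCount_unrooted hQ]
  calc #S * (d * Q * 2 ^ d + r * (2 ^ d - 1))
      = Q * (d * 2 ^ d * #S) + (2 ^ d - 1) * (r * #S) := by ring
    _ ≤ Q * (d * 2 ^ d * #S) + (2 ^ d - 1) * (Q * (#(fringe d S (Ioc d (d * (Q + 1))))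
          + ∑ x ∈ S, rootCount d Q r x)) := by gcongr
    _ = Q * (d * 2 ^ d * #S + (2 ^ d - 1) * (#(fringe d S (Ioc d (d * (Q + 1))))
          + ∑ x ∈ S, rootCount d Q r x)) := by ring
    _ ≤ Q * (d * eCount (Tr d Q r) S) := by gcongr
    _ = d * Q * eCount (Tr d Q r) S := by ring

end RootCount

/-- **Proposition.** For all integers `d, Q ≥ 1` and `r ≥ 0`, the rooted `d`-tree `T_r`
has `dQ + r` facets and `r` vertex roots, is balanced (the density of the set of all
unrooted vertices is minimal among all nonempty sets of unrooted vertices), and its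
min-density is `2^d + (r/(dQ))·(2^d − 1)`. -/
theorem Tr_balanced_and_density (d Q r : ℕ) (hd : 1 ≤ d) (hQ : 1 ≤ Q) :
    ((Tr d Q r).filter (fun σ => σ.card = d + 1)).card = d * Q + r ∧
    (rootSet d Q r).card = r ∧
    (∀ S ⊆ unrooted d Q r, S.Nonempty →
      dens (Tr d Q r) (unrooted d Q r) ≤ dens (Tr d Q r) S) ∧
    dens (Tr d Q r) (unrooted d Q r) =
      2 ^ d + ((r : ℝ) / ((d : ℝ) * (Q : ℝ))) * ((2 : ℝ) ^ d - 1) := by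
  have hU := unrooted_eq (d := d) (r := r) hQ
  have hUcard : (unrooted d Q r).card = d * Q := by
    rw [hU, Nat.card_Ioc, mul_add_one, Nat.add_sub_cancel]
  have hdQ : (0 : ℝ) < d * Q := by positivity
  refine ⟨card_facets_Tr hQ,
    (Finset.card_image_of_injective _ rootVtx_injective).trans (Finset.card_range r),
    fun S hS hne => ?_, ?_⟩
  · rw [dens, dens, hUcard,
      div_le_div_iff₀ (by exact_mod_cast hdQ) (by exact_mod_cast hne.card_pos)]
    rw [hU] at hS ⊢
    have := card_mul_eCount_unrooted_le (r := r) hQ hS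
    exact_mod_cast by linarith
  · rw [dens, hUcard, hU, eCount_unrooted hQ]
    push_cast [Nat.cast_sub Nat.one_le_two_pow]
    field_simp
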